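/- Let β_A, β_H > 0 and α_A, α_H > 0 with β_A ≠ β_H, α_A ≠ α_H, β_A/β_H ≠ α_A/α_H and (α_H − α_A)/(β_A − β_H) ∈ ℕ (class P_SP,3d), let λ ∈ (0,1) and ω₀ ≥ 1. Set φ_λ(x) := f_A(x)^λ·f_H(x)^{1−λ} − (λ·f_A(x) + (1−λ)·f_H(x)), ε := 1 − e^{φ_λ(0)} ∈ (0,1) and δ := sup_{x∈ℕ₀} exp( φ_λ(x) − ε·e^{−f_A(x)^λ·f_H(x)^{1−λ}} ). Then δ < 1, H_{λ,n} ≤ δ^{⌊n/2⌋} for all n ≥ 1, and consequently lim_{n→∞} H_{λ,n} = 0. -/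
import Mathlib


open Real Filter
open scoped ENNReal

/-- One transition weight of the Poisson Galton–Watson process with immigration:
probability that the next generation size is `y` given the previous size is `x`. -/
noncomputable def gwStep (β α : ℝ) (x y : ℕ) : ℝ :=
  Real.exp (-(β * (x : ℝ) + α)) * (β * (x : ℝ) + α) ^ y / (Nat.factorial y : ℝ)

/-- The `n`-step path law (pmf on `Fin n → ℕ`) with initial generation size `ω₀`. -/
noncomputable def gwPath (β α : ℝ) (ω₀ n : ℕ) (ω : Fin n → ℕ) : ℝ :=
  ∏ k : Fin n,
    gwStep β α
      (if (k : ℕ) = 0 then ω₀ else ω ⟨(k : ℕ) - 1, Nat.lt_of_le_of_lt (Nat.sub_le _ _) k.2⟩)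
      (ω k)

/-- Hellinger integral of order `lam` between the `n`-step path laws. -/
noncomputable def hellinger (βA αA βH αH lam : ℝ) (ω₀ n : ℕ) : ℝ :=
  ∑' ω : Fin n → ℕ, gwPath βA αA ω₀ n ω ^ lam * gwPath βH αH ω₀ n ω ^ (1 - lam)

/-- The recursion `a₀ = 0`, `a_{n+1} = q·e^{a_n} − βl`. -/
noncomputable def aSeq (q βl : ℝ) : ℕ → ℝ
  | 0 => 0
  | n + 1 => q * Real.exp (aSeq q βl n) - βl

/-- The recursion `b₀ = 0`, `b_{n+1} = p·e^{a_n} − αl`. -/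
noncomputable def bSeq (p q βl αl : ℝ) : ℕ → ℝ
  | 0 => 0
  | n + 1 => p * Real.exp (aSeq q βl n) - αl

/-! ### Auxiliary lemmas -/

/-- Strict two-point weighted AM–GM. -/
lemma gw_strict_amgm {a b w : ℝ} (ha : 0 < a) (hb : 0 < b) (hab : a ≠ b)
    (hw0 : 0 < w) (hw1 : w < 1) :
    a ^ w * b ^ (1 - w) < w * a + (1 - w) * b := by
  have h1w : 0 < 1 - w := by linarith
  have h := strictConcaveOn_log_Ioi.2 (Set.mem_Ioi.2 ha) (Set.mem_Ioi.2 hb) hab hw0 h1w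
      (by ring)
  simp only [smul_eq_mul] at h
  have hpos : 0 < w * a + (1 - w) * b := by positivity
  have hl : a ^ w * b ^ (1 - w) = Real.exp (w * Real.log a + (1 - w) * Real.log b) := by
    rw [Real.exp_add, Real.rpow_def_of_pos ha, Real.rpow_def_of_pos hb]
    ring_nf
  rw [hl]
  calc Real.exp (w * Real.log a + (1 - w) * Real.log b)
      < Real.exp (Real.log (w * a + (1 - w) * b)) := Real.exp_lt_exp.2 h
    _ = w * a + (1 - w) * b := Real.exp_log hpos

/-- Weak two-point weighted AM–GM. -/
lemma gw_amgm {a b w : ℝ} (ha : 0 ≤ a) (hb : 0 ≤ b) (hw0 : 0 ≤ w) (hw1 : w ≤ 1) :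
    a ^ w * b ^ (1 - w) ≤ w * a + (1 - w) * b :=
  Real.geom_mean_le_arith_mean2_weighted hw0 (by linarith) ha hb (by ring)

/-- Young-type bound: `a^w b^(1-w) ≤ w a c^(w-1) + (1-w) b c^w`. -/
lemma gw_young {a b c w : ℝ} (ha : 0 ≤ a) (hb : 0 ≤ b) (hc : 0 < c) (hw0 : 0 ≤ w) (hw1 : w ≤ 1) :
    a ^ w * b ^ (1 - w) ≤ w * (a * c ^ (w - 1)) + (1 - w) * (b * c ^ w) := by
  have key : a ^ w * b ^ (1 - w) = (a * c ^ (w - 1)) ^ w * (b * c ^ w) ^ (1 - w) := by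
    rw [Real.mul_rpow ha (Real.rpow_nonneg hc.le _),
      Real.mul_rpow hb (Real.rpow_nonneg hc.le _),
      ← Real.rpow_mul hc.le, ← Real.rpow_mul hc.le]
    have : c ^ ((w - 1) * w) * c ^ (w * (1 - w)) = 1 := by
      rw [← Real.rpow_add hc]
      have : (w - 1) * w + w * (1 - w) = 0 := by ring
      rw [this, Real.rpow_zero]
    calc a ^ w * b ^ (1 - w) = a ^ w * b ^ (1 - w) * (c ^ ((w-1)*w) * c ^ (w*(1-w))) := by
          rw [this, mul_one]
      _ = a ^ w * c ^ ((w - 1) * w) * (b ^ (1 - w) * c ^ (w * (1 - w))) := by ring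
  rw [key]
  exact Real.geom_mean_le_arith_mean2_weighted hw0 (by linarith) (by positivity) (by positivity)
    (by ring)

/-- The cross term of two Poisson weights. -/
lemma gw_cross {a b w : ℝ} (ha : 0 < a) (hb : 0 < b) (hw0 : 0 < w) (hw1 : w < 1) (y : ℕ) :
    (Real.exp (-a) * a ^ y / (Nat.factorial y : ℝ)) ^ w
      * (Real.exp (-b) * b ^ y / (Nat.factorial y : ℝ)) ^ (1 - w)
    = Real.exp (-(w * a + (1 - w) * b)) * (a ^ w * b ^ (1 - w)) ^ y / (Nat.factorial y : ℝ) := by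
  have hfac : (0:ℝ) < (Nat.factorial y : ℝ) := by positivity
  have h1 : ∀ c v : ℝ, 0 < c → 0 ≤ v →
      (Real.exp (-c) * c ^ y / (Nat.factorial y : ℝ)) ^ v
        = Real.exp (-c * v) * (c ^ v) ^ y / (Nat.factorial y : ℝ) ^ v := by
    intro c v hc hv
    rw [Real.div_rpow (by positivity) hfac.le, Real.mul_rpow (Real.exp_pos _).le (by positivity),
      ← Real.exp_mul, ← Real.rpow_natCast c y, ← Real.rpow_mul hc.le, mul_comm (y:ℝ) v,
      Real.rpow_mul hc.le, Real.rpow_natCast]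
  rw [h1 a w ha hw0.le, h1 b (1-w) hb (by linarith)]
  rw [div_mul_div_comm, ← Real.rpow_add hfac]
  have e1 : rexp (-a * w) * (a ^ w) ^ y * (rexp (-b * (1 - w)) * (b ^ (1 - w)) ^ y)
      = rexp (-(w * a + (1 - w) * b)) * (a ^ w * b ^ (1 - w)) ^ y := by
    rw [mul_pow]
    have : rexp (-a * w) * rexp (-b * (1 - w)) = rexp (-(w * a + (1 - w) * b)) := by
      rw [← Real.exp_add]; congr 1; ring
    calc rexp (-a * w) * (a ^ w) ^ y * (rexp (-b * (1 - w)) * (b ^ (1 - w)) ^ y)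
        = rexp (-a * w) * rexp (-b * (1 - w)) * ((a ^ w) ^ y * (b ^ (1 - w)) ^ y) := by ring
      _ = rexp (-(w * a + (1 - w) * b)) * ((a ^ w) ^ y * (b ^ (1 - w)) ^ y) := by rw [this]
  have e2 : w + (1 - w) = 1 := by ring
  rw [e1, e2, Real.rpow_one]

lemma gw_poisson_summable (A g : ℝ) :
    Summable fun y : ℕ => Real.exp A * g ^ y / (Nat.factorial y : ℝ) := by
  simpa [mul_div_assoc] using (Real.summable_pow_div_factorial g).mul_left (Real.exp A)

lemma gw_poisson_tsum (A g : ℝ) :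
    ∑' y : ℕ, Real.exp A * g ^ y / (Nat.factorial y : ℝ) = Real.exp (g + A) := by
  have h : ∑' y : ℕ, g ^ y / (Nat.factorial y : ℝ) = Real.exp g := by
    rw [Real.exp_eq_exp_ℝ, NormedSpace.exp_eq_tsum_div]
  calc ∑' y : ℕ, Real.exp A * g ^ y / (Nat.factorial y : ℝ)
      = Real.exp A * ∑' y : ℕ, g ^ y / (Nat.factorial y : ℝ) := by
        simp_rw [mul_div_assoc]; exact tsum_mul_left
    _ = Real.exp (g + A) := by rw [h, ← Real.exp_add, add_comm]

lemma gwStep_nonneg {β α : ℝ} (hβ : 0 < β) (hα : 0 < α) (x y : ℕ) :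
    0 ≤ gwStep β α x y := by
  unfold gwStep
  positivity

lemma gwPath_nonneg {β α : ℝ} (hβ : 0 < β) (hα : 0 < α) (x n : ℕ) (ω : Fin n → ℕ) :
    0 ≤ gwPath β α x n ω :=
  Finset.prod_nonneg fun k _ => gwStep_nonneg hβ hα _ _

lemma gwPath_succ (β α : ℝ) (x n : ℕ) (ω : Fin (n + 1) → ℕ) :
    gwPath β α x (n + 1) ω
      = gwStep β α x (ω 0) * gwPath β α (ω 0) n (Fin.tail ω) := by
  unfold gwPath
  rw [Fin.prod_univ_succ]
  congr 1
  refine Finset.prod_congr rfl fun i _ => ?_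
  have hsv : ((Fin.succ i : Fin (n + 1)) : ℕ) = (i : ℕ) + 1 := rfl
  have htail : ∀ j : Fin n, Fin.tail ω j = ω j.succ := fun j => rfl
  have hne : ((Fin.succ i : Fin (n + 1)) : ℕ) ≠ 0 := by simp [hsv]
  rw [if_neg hne]
  simp only [Fin.tail]
  rcases Nat.eq_zero_or_pos (i : ℕ) with hi | hi
  · rw [if_pos hi]
    refine congrArg (fun z => gwStep β α (ω z) (ω i.succ)) ?_
    rw [Fin.ext_iff]
    show (i.succ : ℕ) - 1 = 0
    omega
  · rw [if_neg (Nat.pos_iff_ne_zero.mp hi)]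
    refine congrArg (fun z => gwStep β α (ω z) (ω i.succ)) ?_
    rw [Fin.ext_iff]
    show (i.succ : ℕ) - 1 = (i : ℕ) - 1 + 1
    omega

lemma gw_key_sum {u v : ℕ → ℝ} (hu : Summable u) (hu0 : ∀ y, 0 ≤ u y)
    (hv0 : ∀ y, 0 ≤ v y) (hv1 : ∀ y, v y ≤ 1) :
    ∑' y, u y * v y ≤ (∑' y, u y) - u 0 * (1 - v 0) := by
  have huv : Summable fun y => u y * v y :=
    hu.of_nonneg_of_le (fun y => mul_nonneg (hu0 y) (hv0 y))
      (fun y => mul_le_of_le_one_right (hu0 y) (hv1 y))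
  rw [Summable.tsum_eq_zero_add huv, Summable.tsum_eq_zero_add hu]
  have h : ∑' y, u (y+1) * v (y+1) ≤ ∑' y, u (y+1) :=
    Summable.tsum_le_tsum (fun y => mul_le_of_le_one_right (hu0 _) (hv1 _))
      ((summable_nat_add_iff 1).2 huv) ((summable_nat_add_iff 1).2 hu)
  linarith

/-- ENNReal-valued Hellinger sum with arbitrary initial state. -/
noncomputable def gwG (βA αA βH αH lam : ℝ) (n x : ℕ) : ℝ≥0∞ :=
  ∑' ω : Fin n → ℕ,
    ENNReal.ofReal (gwPath βA αA x n ω ^ lam * gwPath βH αH x n ω ^ (1 - lam))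

lemma gwG_zero (βA αA βH αH lam : ℝ) (x : ℕ) : gwG βA αA βH αH lam 0 x = 1 := by
  unfold gwG
  rw [tsum_eq_single (fun i => i.elim0)
    (fun b hb => absurd (Subsingleton.elim b _) hb)]
  simp [gwPath, Real.one_rpow]

lemma gwG_succ {βA αA βH αH lam : ℝ} (hβA : 0 < βA) (hαA : 0 < αA)
    (hβH : 0 < βH) (hαH : 0 < αH) (n x : ℕ) :
    gwG βA αA βH αH lam (n + 1) x
      = ∑' y : ℕ, ENNReal.ofReal (gwStep βA αA x y ^ lam * gwStep βH αH x y ^ (1 - lam))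
          * gwG βA αA βH αH lam n y := by
  unfold gwG
  rw [← Equiv.tsum_eq (Fin.consEquiv fun _ : Fin (n + 1) => ℕ)]
  rw [ENNReal.tsum_prod']
  refine tsum_congr fun y => ?_
  rw [← ENNReal.tsum_mul_left]
  refine tsum_congr fun τ => ?_
  have hA := gwPath_succ βA αA x n (Fin.cons y τ)
  have hH := gwPath_succ βH αH x n (Fin.cons y τ)
  rw [Fin.cons_zero, Fin.tail_cons] at hA hH
  show ENNReal.ofReal
      (gwPath βA αA x (n+1) (Fin.cons y τ) ^ lam * gwPath βH αH x (n+1) (Fin.cons y τ) ^ (1-lam))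
    = _
  rw [hA, hH, Real.mul_rpow (gwStep_nonneg hβA hαA _ _) (gwPath_nonneg hβA hαA _ _ _),
    Real.mul_rpow (gwStep_nonneg hβH hαH _ _) (gwPath_nonneg hβH hαH _ _ _),
    ← ENNReal.ofReal_mul (mul_nonneg (Real.rpow_nonneg (gwStep_nonneg hβA hαA _ _) _)
      (Real.rpow_nonneg (gwStep_nonneg hβH hαH _ _) _))]
  exact congrArg ENNReal.ofReal (by ring)

/-- The cross transition weight. -/
noncomputable def gwS (βA αA βH αH lam : ℝ) (x y : ℕ) : ℝ :=
  gwStep βA αA x y ^ lam * gwStep βH αH x y ^ (1 - lam)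

lemma gwS_eq {βA αA βH αH lam : ℝ} (hβA : 0 < βA) (hαA : 0 < αA)
    (hβH : 0 < βH) (hαH : 0 < αH) (hl0 : 0 < lam) (hl1 : lam < 1) (x y : ℕ) :
    gwS βA αA βH αH lam x y
      = Real.exp (-(lam * (βA * x + αA) + (1 - lam) * (βH * x + αH)))
        * ((βA * x + αA) ^ lam * (βH * x + αH) ^ (1 - lam)) ^ y / (Nat.factorial y : ℝ) := by
  have hfA : (0:ℝ) < βA * x + αA := by positivity
  have hfH : (0:ℝ) < βH * x + αH := by positivity
  exact gw_cross hfA hfH hl0 hl1 y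

lemma gwS_nonneg {βA αA βH αH lam : ℝ} (hβA : 0 < βA) (hαA : 0 < αA)
    (hβH : 0 < βH) (hαH : 0 < αH) (x y : ℕ) : 0 ≤ gwS βA αA βH αH lam x y :=
  mul_nonneg (Real.rpow_nonneg (gwStep_nonneg hβA hαA _ _) _)
    (Real.rpow_nonneg (gwStep_nonneg hβH hαH _ _) _)

lemma gwS_summable {βA αA βH αH lam : ℝ} (hβA : 0 < βA) (hαA : 0 < αA)
    (hβH : 0 < βH) (hαH : 0 < αH) (hl0 : 0 < lam) (hl1 : lam < 1) (x : ℕ) :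
    Summable (gwS βA αA βH αH lam x) := by
  have : gwS βA αA βH αH lam x = fun y =>
      Real.exp (-(lam * (βA * x + αA) + (1 - lam) * (βH * x + αH)))
        * ((βA * x + αA) ^ lam * (βH * x + αH) ^ (1 - lam)) ^ y / (Nat.factorial y : ℝ) :=
    funext (gwS_eq hβA hαA hβH hαH hl0 hl1 x)
  rw [this]
  exact gw_poisson_summable _ _

lemma gwS_tsum {βA αA βH αH lam : ℝ} (hβA : 0 < βA) (hαA : 0 < αA)
    (hβH : 0 < βH) (hαH : 0 < αH) (hl0 : 0 < lam) (hl1 : lam < 1) (x : ℕ) :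
    ∑' y : ℕ, gwS βA αA βH αH lam x y
      = Real.exp ((βA * x + αA) ^ lam * (βH * x + αH) ^ (1 - lam)
          - (lam * (βA * x + αA) + (1 - lam) * (βH * x + αH))) := by
  have : gwS βA αA βH αH lam x = fun y =>
      Real.exp (-(lam * (βA * x + αA) + (1 - lam) * (βH * x + αH)))
        * ((βA * x + αA) ^ lam * (βH * x + αH) ^ (1 - lam)) ^ y / (Nat.factorial y : ℝ) :=
    funext (gwS_eq hβA hαA hβH hαH hl0 hl1 x)
  rw [this, gw_poisson_tsum]
  congr 1

lemma gwG_succ' {βA αA βH αH lam : ℝ} (hβA : 0 < βA) (hαA : 0 < αA)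
    (hβH : 0 < βH) (hαH : 0 < αH) (n x : ℕ) :
    gwG βA αA βH αH lam (n + 1) x
      = ∑' y : ℕ, ENNReal.ofReal (gwS βA αA βH αH lam x y) * gwG βA αA βH αH lam n y :=
  gwG_succ hβA hαA hβH hαH n x

/-- In the class `P_SP,3d` (strictly positive parameters, `β_A ≠ β_H`,
`α_A ≠ α_H`, `β_A/β_H ≠ α_A/α_H`, `(α_H − α_A)/(β_A − β_H) ∈ ℕ`), with
`φ_λ(x) = f_A(x)^λ f_H(x)^{1−λ} − (λ f_A(x) + (1−λ) f_H(x))`, `ε = 1 − e^{φ_λ(0)}` and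
`δ = sup_{x∈ℕ₀} exp(φ_λ(x) − ε·e^{−f_A(x)^λ f_H(x)^{1−λ}})`, one has `ε ∈ (0,1)`, `δ < 1`,
`H_{λ,n} ≤ δ^{⌊n/2⌋}`, and `H_{λ,n} → 0`. -/
theorem hellinger_SP3d_tendsto_zero (βA βH αA αH lam : ℝ)
    (hβA : 0 < βA) (hβH : 0 < βH) (hαA : 0 < αA) (hαH : 0 < αH)
    (hβne : βA ≠ βH) (hαne : αA ≠ αH) (hratio : βA / βH ≠ αA / αH)
    (hstar : ∃ k : ℕ, 0 < k ∧ (αH - αA) / (βA - βH) = (k : ℝ))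
    (hlam : lam ∈ Set.Ioo (0 : ℝ) 1) (ω₀ : ℕ) (hω₀ : 1 ≤ ω₀)
    (φ : ℕ → ℝ)
    (hφ : ∀ x : ℕ, φ x = (βA * (x : ℝ) + αA) ^ lam * (βH * (x : ℝ) + αH) ^ (1 - lam)
      - (lam * (βA * (x : ℝ) + αA) + (1 - lam) * (βH * (x : ℝ) + αH)))
    (ε : ℝ) (hε : ε = 1 - Real.exp (φ 0))
    (δ : ℝ)
    (hδ : δ = ⨆ x : ℕ, Real.exp (φ x
      - ε * Real.exp (-((βA * (x : ℝ) + αA) ^ lam * (βH * (x : ℝ) + αH) ^ (1 - lam))))) :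
    ε ∈ Set.Ioo (0 : ℝ) 1 ∧
    δ < 1 ∧
    (∀ n : ℕ, 1 ≤ n → hellinger βA αA βH αH lam ω₀ n ≤ δ ^ (n / 2)) ∧
    Tendsto (fun n : ℕ => hellinger βA αA βH αH lam ω₀ n) atTop (nhds 0) := by
  obtain ⟨hl0, hl1⟩ := hlam
  have hfA : ∀ x : ℕ, (0:ℝ) < βA * x + αA := fun x => by positivity
  have hfH : ∀ x : ℕ, (0:ℝ) < βH * x + αH := fun x => by positivity
  -- `φ` is nonpositive
  have hφle : ∀ x : ℕ, φ x ≤ 0 := by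
    intro x
    rw [hφ x]
    have := gw_amgm (hfA x).le (hfH x).le hl0.le hl1.le
    linarith
  have hφ0 : φ 0 < 0 := by
    have h := gw_strict_amgm hαA hαH hαne hl0 hl1
    rw [hφ 0]
    simp only [Nat.cast_zero, mul_zero, zero_add]
    linarith
  have hε0 : 0 < ε := by
    have h1 : rexp (φ 0) < 1 := by
      rw [← Real.exp_zero]
      exact Real.exp_lt_exp.2 hφ0
    rw [hε]; linarith
  have hε1 : ε < 1 := by
    have := Real.exp_pos (φ 0)
    rw [hε]; linarith
  -- the sup function
  set hfun : ℕ → ℝ := fun x => Real.exp (φ x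
      - ε * Real.exp (-((βA * (x : ℝ) + αA) ^ lam * (βH * (x : ℝ) + αH) ^ (1 - lam))))
    with hfun_def
  have hδ' : δ = ⨆ x : ℕ, hfun x := hδ
  have hh1 : ∀ x, hfun x < 1 := by
    intro x
    have h2 : 0 < ε * rexp (-((βA * (x : ℝ) + αA) ^ lam * (βH * (x : ℝ) + αH) ^ (1 - lam))) :=
      mul_pos hε0 (Real.exp_pos _)
    have h3 : φ x - ε * rexp (-((βA * (x : ℝ) + αA) ^ lam * (βH * (x : ℝ) + αH) ^ (1 - lam))) < 0 := by
      linarith [hφle x]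
    have := Real.exp_lt_exp.2 h3
    rwa [Real.exp_zero] at this
  have hbdd : BddAbove (Set.range hfun) := ⟨1, by rintro t ⟨x, rfl⟩; exact (hh1 x).le⟩
  have hδpos : 0 < δ := by
    rw [hδ']
    exact lt_of_lt_of_le (Real.exp_pos _) (le_ciSup hbdd 0)
  -- linear upper bound on φ
  have hcpos : (0:ℝ) < βA / βH := by positivity
  have hcA : βA * (βA / βH) ^ (lam - 1) = βA ^ lam * βH ^ (1 - lam) := by
    rw [Real.div_rpow hβA.le hβH.le, div_eq_mul_inv, ← Real.rpow_neg hβH.le, neg_sub]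
    rw [← mul_assoc]
    congr 1
    nth_rewrite 1 [← Real.rpow_one βA]
    rw [← Real.rpow_add hβA]
    congr 1
    ring
  have hcH : βH * (βA / βH) ^ lam = βA ^ lam * βH ^ (1 - lam) := by
    rw [Real.div_rpow hβA.le hβH.le, div_eq_mul_inv, ← Real.rpow_neg hβH.le]
    rw [show βH * (βA ^ lam * βH ^ (-lam)) = βA ^ lam * (βH * βH ^ (-lam)) from by ring]
    congr 1
    nth_rewrite 1 [← Real.rpow_one βH]
    rw [← Real.rpow_add hβH]
    congr 1
  have hm : βA ^ lam * βH ^ (1 - lam) < lam * βA + (1 - lam) * βH :=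
    gw_strict_amgm hβA hβH hβne hl0 hl1
  set κ : ℝ := lam * βA + (1 - lam) * βH - βA ^ lam * βH ^ (1 - lam) with hκdef
  have hκ : 0 < κ := by rw [hκdef]; linarith
  set Cc : ℝ := lam * (αA * (βA / βH) ^ (lam - 1)) + (1 - lam) * (αH * (βA / βH) ^ lam)
      - (lam * αA + (1 - lam) * αH) with hCcdef
  have hlin : ∀ x : ℕ, φ x ≤ Cc - κ * x := by
    intro x
    rw [hφ x, hκdef, hCcdef]
    have hy := gw_young (hfA x).le (hfH x).le hcpos hl0.le hl1.le
    have expand : lam * ((βA * x + αA) * (βA / βH) ^ (lam - 1))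
          + (1 - lam) * ((βH * x + αH) * (βA / βH) ^ lam)
        = (lam * (βA * (βA / βH) ^ (lam - 1)) + (1 - lam) * (βH * (βA / βH) ^ lam)) * x
          + (lam * (αA * (βA / βH) ^ (lam - 1)) + (1 - lam) * (αH * (βA / βH) ^ lam)) := by
      ring
    rw [hcA, hcH] at expand
    nlinarith [hy, expand]
  -- tail bound for hfun
  set N : ℕ := ⌈(Cc + Real.log 2) / κ⌉₊ with hNdef
  have htail : ∀ x : ℕ, N ≤ x → hfun x ≤ 1/2 := by
    intro x hx
    have h2 : (Cc + Real.log 2) / κ ≤ (N : ℝ) := Nat.le_ceil _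
    have h3 : (N : ℝ) ≤ (x : ℝ) := Nat.cast_le.2 hx
    rw [div_le_iff₀ hκ] at h2
    have h4 : Cc + Real.log 2 ≤ κ * x := by nlinarith
    have h1 : φ x ≤ -Real.log 2 := by linarith [hlin x]
    have hstep1 : hfun x ≤ rexp (φ x) := by
      apply Real.exp_le_exp.2
      have : 0 < ε * rexp (-((βA * (x : ℝ) + αA) ^ lam * (βH * (x : ℝ) + αH) ^ (1 - lam))) :=
        mul_pos hε0 (Real.exp_pos _)
      linarith
    calc hfun x ≤ rexp (φ x) := hstep1
      _ ≤ rexp (-Real.log 2) := Real.exp_le_exp.2 h1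
      _ = 1/2 := by
          rw [Real.exp_neg, Real.exp_log (by norm_num : (0:ℝ) < 2)]
          norm_num
  have hδlt1 : δ < 1 := by
    have hne : (Finset.range (N+1)).Nonempty := ⟨0, Finset.mem_range.2 (Nat.succ_pos _)⟩
    have hδle : δ ≤ max ((Finset.range (N+1)).sup' hne hfun) (1/2) := by
      rw [hδ']
      refine ciSup_le fun x => ?_
      by_cases hx : x ≤ N
      · exact le_max_of_le_left (Finset.le_sup' hfun (Finset.mem_range.2 (by omega)))
      · exact le_max_of_le_right (htail x (by omega))
    have hM : (Finset.range (N+1)).sup' hne hfun < 1 :=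
      (Finset.sup'_lt_iff hne).2 fun x _ => hh1 x
    exact lt_of_le_of_lt hδle (max_lt hM (by norm_num))
  -- the key one-step real estimate
  have hkeyR : ∀ x : ℕ, ∑' y : ℕ, gwS βA αA βH αH lam x y * rexp (φ y) ≤ δ := by
    intro x
    have hsum := gwS_summable hβA hαA hβH hαH hl0 hl1 x
    have h1 := gw_key_sum hsum (gwS_nonneg hβA hαA hβH hαH x)
      (fun y => (Real.exp_pos (φ y)).le) (fun y => Real.exp_le_one_iff.2 (hφle y))
    have hS0 : gwS βA αA βH αH lam x 0
        = rexp (-(lam * (βA * x + αA) + (1 - lam) * (βH * x + αH))) := by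
      rw [gwS_eq hβA hαA hβH hαH hl0 hl1 x 0]
      simp
    have htsum : ∑' y : ℕ, gwS βA αA βH αH lam x y = rexp (φ x) := by
      rw [gwS_tsum hβA hαA hβH hαH hl0 hl1 x, ← hφ x]
    rw [htsum, hS0] at h1
    have hεeq : 1 - rexp (φ 0) = ε := by rw [hε]
    rw [hεeq] at h1
    -- now bound the RHS by `hfun x` and then by `δ`
    have hexpg : rexp (φ x)
          * rexp (-((βA * (x : ℝ) + αA) ^ lam * (βH * (x : ℝ) + αH) ^ (1 - lam)))
        = rexp (-(lam * (βA * x + αA) + (1 - lam) * (βH * x + αH))) := by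
      rw [← Real.exp_add]
      congr 1
      rw [hφ x]
      ring
    have ht := Real.add_one_le_exp
      (-(ε * rexp (-((βA * (x : ℝ) + αA) ^ lam * (βH * (x : ℝ) + αH) ^ (1 - lam)))))
    have hmid : rexp (φ x)
          - rexp (-(lam * (βA * x + αA) + (1 - lam) * (βH * x + αH))) * ε ≤ hfun x := by
      have e1 : rexp (φ x)
            - rexp (-(lam * (βA * x + αA) + (1 - lam) * (βH * x + αH))) * ε
          = rexp (φ x) * (1 - ε
              * rexp (-((βA * (x : ℝ) + αA) ^ lam * (βH * (x : ℝ) + αH) ^ (1 - lam)))) := by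
        rw [← hexpg]; ring
      have e2 : rexp (φ x) * (1 - ε
            * rexp (-((βA * (x : ℝ) + αA) ^ lam * (βH * (x : ℝ) + αH) ^ (1 - lam))))
          ≤ rexp (φ x) * rexp (-(ε
            * rexp (-((βA * (x : ℝ) + αA) ^ lam * (βH * (x : ℝ) + αH) ^ (1 - lam))))) :=
        mul_le_mul_of_nonneg_left (by linarith) (Real.exp_pos _).le
      have e3 : rexp (φ x) * rexp (-(ε
            * rexp (-((βA * (x : ℝ) + αA) ^ lam * (βH * (x : ℝ) + αH) ^ (1 - lam)))))
          = hfun x := by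
        rw [hfun_def, ← Real.exp_add]
        congr 1
      rw [e1]
      linarith [e2, e3.le, e3.ge]
    have hfδ : hfun x ≤ δ := by
      rw [hδ']
      exact le_ciSup hbdd x
    calc ∑' y : ℕ, gwS βA αA βH αH lam x y * rexp (φ y)
        ≤ rexp (φ x) - rexp (-(lam * (βA * x + αA) + (1 - lam) * (βH * x + αH))) * ε := by
          linarith [h1]
      _ ≤ hfun x := hmid
      _ ≤ δ := hfδ
  -- move to `ℝ≥0∞`
  have hSE : ∀ x : ℕ, ∑' y : ℕ, ENNReal.ofReal (gwS βA αA βH αH lam x y)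
      = ENNReal.ofReal (rexp (φ x)) := by
    intro x
    rw [← ENNReal.ofReal_tsum_of_nonneg (gwS_nonneg hβA hαA hβH hαH x)
      (gwS_summable hβA hαA hβH hαH hl0 hl1 x)]
    congr 1
    rw [gwS_tsum hβA hαA hβH hαH hl0 hl1 x, ← hφ x]
  have hkeyE : ∀ x : ℕ, ∑' y : ℕ, ENNReal.ofReal (gwS βA αA βH αH lam x y)
        * ENNReal.ofReal (rexp (φ y)) ≤ ENNReal.ofReal δ := by
    intro x
    have hsummable : Summable fun y => gwS βA αA βH αH lam x y * rexp (φ y) :=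
      (gwS_summable hβA hαA hβH hαH hl0 hl1 x).of_nonneg_of_le
        (fun y => mul_nonneg (gwS_nonneg hβA hαA hβH hαH x y) (Real.exp_pos _).le)
        (fun y => mul_le_of_le_one_right (gwS_nonneg hβA hαA hβH hαH x y)
          (Real.exp_le_one_iff.2 (hφle y)))
    calc ∑' y : ℕ, ENNReal.ofReal (gwS βA αA βH αH lam x y) * ENNReal.ofReal (rexp (φ y))
        = ∑' y : ℕ, ENNReal.ofReal (gwS βA αA βH αH lam x y * rexp (φ y)) :=
          tsum_congr fun y => (ENNReal.ofReal_mul (gwS_nonneg hβA hαA hβH hαH x y)).symm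
      _ = ENNReal.ofReal (∑' y : ℕ, gwS βA αA βH αH lam x y * rexp (φ y)) :=
          (ENNReal.ofReal_tsum_of_nonneg
            (fun y => mul_nonneg (gwS_nonneg hβA hαA hβH hαH x y) (Real.exp_pos _).le)
            hsummable).symm
      _ ≤ ENNReal.ofReal δ := ENNReal.ofReal_le_ofReal (hkeyR x)
  -- the main induction
  have hD1 : ENNReal.ofReal δ ≤ 1 := ENNReal.ofReal_le_one.2 hδlt1.le
  have main : ∀ n x : ℕ, gwG βA αA βH αH lam n x ≤ ENNReal.ofReal δ ^ (n / 2) := by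
    intro n
    induction n using Nat.strong_induction_on with
    | _ n ih =>
      rcases n with _ | n
      · intro x
        rw [gwG_zero]
        norm_num
      rcases n with _ | n
      · intro x
        rw [gwG_succ' hβA hαA hβH hαH 0 x]
        have h1 : ∀ y : ℕ, gwG βA αA βH αH lam 0 y = 1 := gwG_zero βA αA βH αH lam
        calc ∑' y : ℕ, ENNReal.ofReal (gwS βA αA βH αH lam x y) * gwG βA αA βH αH lam 0 y
            = ∑' y : ℕ, ENNReal.ofReal (gwS βA αA βH αH lam x y) := by
              refine tsum_congr fun y => ?_
              rw [h1 y, mul_one]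
          _ = ENNReal.ofReal (rexp (φ x)) := hSE x
          _ ≤ 1 := ENNReal.ofReal_le_one.2 (Real.exp_le_one_iff.2 (hφle x))
          _ = ENNReal.ofReal δ ^ (1 / 2) := by norm_num
      · intro x
        have step1 : ∀ y : ℕ, gwG βA αA βH αH lam (n + 1) y
            ≤ ENNReal.ofReal (rexp (φ y)) * ENNReal.ofReal δ ^ (n / 2) := by
          intro y
          rw [gwG_succ' hβA hαA hβH hαH n y]
          calc ∑' z : ℕ, ENNReal.ofReal (gwS βA αA βH αH lam y z) * gwG βA αA βH αH lam n z
              ≤ ∑' z : ℕ, ENNReal.ofReal (gwS βA αA βH αH lam y z) * ENNReal.ofReal δ ^ (n / 2) :=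
                ENNReal.tsum_le_tsum fun z => mul_le_mul_right (ih n (by omega) z) _
            _ = (∑' z : ℕ, ENNReal.ofReal (gwS βA αA βH αH lam y z)) * ENNReal.ofReal δ ^ (n / 2) :=
                ENNReal.tsum_mul_right
            _ = ENNReal.ofReal (rexp (φ y)) * ENNReal.ofReal δ ^ (n / 2) := by rw [hSE y]
        rw [gwG_succ' hβA hαA hβH hαH (n + 1) x]
        calc ∑' y : ℕ, ENNReal.ofReal (gwS βA αA βH αH lam x y) * gwG βA αA βH αH lam (n + 1) y
            ≤ ∑' y : ℕ, ENNReal.ofReal (gwS βA αA βH αH lam x y)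
                * (ENNReal.ofReal (rexp (φ y)) * ENNReal.ofReal δ ^ (n / 2)) :=
              ENNReal.tsum_le_tsum fun y => mul_le_mul_right (step1 y) _
          _ = (∑' y : ℕ, ENNReal.ofReal (gwS βA αA βH αH lam x y)
                * ENNReal.ofReal (rexp (φ y))) * ENNReal.ofReal δ ^ (n / 2) := by
              rw [← ENNReal.tsum_mul_right]
              exact tsum_congr fun y => by rw [mul_assoc]
          _ ≤ ENNReal.ofReal δ * ENNReal.ofReal δ ^ (n / 2) :=
              mul_le_mul_left (hkeyE x) _
          _ = ENNReal.ofReal δ ^ ((n + 2) / 2) := by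
              rw [show (n + 2) / 2 = n / 2 + 1 from by omega, pow_succ, mul_comm]
  -- convert back to the real Hellinger integrals
  have hterm_nonneg : ∀ n (ω : Fin n → ℕ),
      0 ≤ gwPath βA αA ω₀ n ω ^ lam * gwPath βH αH ω₀ n ω ^ (1 - lam) := fun n ω =>
    mul_nonneg (Real.rpow_nonneg (gwPath_nonneg hβA hαA _ _ _) _)
      (Real.rpow_nonneg (gwPath_nonneg hβH hαH _ _ _) _)
  have hHeq : ∀ n : ℕ, hellinger βA αA βH αH lam ω₀ n = (gwG βA αA βH αH lam n ω₀).toReal := by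
    intro n
    unfold hellinger gwG
    rw [ENNReal.tsum_toReal_eq (fun _ => ENNReal.ofReal_ne_top)]
    exact tsum_congr fun ω => (ENNReal.toReal_ofReal (hterm_nonneg n ω)).symm
  have hbound : ∀ n : ℕ, hellinger βA αA βH αH lam ω₀ n ≤ δ ^ (n / 2) := by
    intro n
    rw [hHeq n]
    calc (gwG βA αA βH αH lam n ω₀).toReal
        ≤ (ENNReal.ofReal δ ^ (n / 2)).toReal :=
          ENNReal.toReal_mono (ENNReal.pow_ne_top ENNReal.ofReal_ne_top) (main n ω₀)
      _ = δ ^ (n / 2) := by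
          rw [← ENNReal.ofReal_pow hδpos.le, ENNReal.toReal_ofReal (pow_nonneg hδpos.le _)]
  have hH_nonneg : ∀ n : ℕ, 0 ≤ hellinger βA αA βH αH lam ω₀ n := by
    intro n
    rw [hHeq n]
    exact ENNReal.toReal_nonneg
  have htend : Tendsto (fun n : ℕ => hellinger βA αA βH αH lam ω₀ n) atTop (nhds 0) := by
    have h2 : Tendsto (fun n : ℕ => δ ^ (n / 2)) atTop (nhds 0) := by
      have hpow : Tendsto (fun k : ℕ => δ ^ k) atTop (nhds 0) :=
        tendsto_pow_atTop_nhds_zero_of_lt_one hδpos.le hδlt1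
      have hdiv : Tendsto (fun n : ℕ => n / 2) atTop atTop :=
        tendsto_atTop_atTop.2 fun b => ⟨2 * b, fun a ha => by omega⟩
      exact hpow.comp hdiv
    exact squeeze_zero hH_nonneg hbound h2
  exact ⟨⟨hε0, hε1⟩, hδlt1, fun n _ => hbound n, htend⟩
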